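/- arXiv:1005.2373 — 15 statements merged into one kernel-verified Lean document; each statement's English description precedes it below -/
import Mathlib

section
/- Let A be a vector space over a field k of characteristic zero, μ : A × A → A a bilinear map, and α : A → A a linear map such that μ(μ(x,y), α(z)) = μ(α(x), μ(y,z)) for all x,y,z ∈ A (i.e., (A, μ, α) is a Hom-associative algebra). Then the commutator bracket [x,y] = μ(x,y) − μ(y,x) satisfies the Hom-Jacobi identity: [α(x),[y,z]] + [α(z),[x,y]] + [α(y),[z,x]] = 0 for all x,y,z ∈ A. -/
/-- The commutator bracket of a Hom-associative algebra satisfies the Hom-Jacobi identity. -/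
theorem stmt_0 {k A : Type*} [Field k] [CharZero k] [AddCommGroup A] [Module k A]
    (μ : A →ₗ[k] A →ₗ[k] A) (α : A →ₗ[k] A)
    (hassoc : ∀ x y z : A, μ (μ x y) (α z) = μ (α x) (μ y z))
    (bracket : A → A → A)
    (hbracket : ∀ x y : A, bracket x y = μ x y - μ y x) :
    ∀ x y z : A,
      bracket (α x) (bracket y z) + bracket (α z) (bracket x y)
        + bracket (α y) (bracket z x) = 0 := by
  intro x y z
  simp only [hbracket, map_sub, LinearMap.sub_apply]
  have h1 := hassoc x y z
  have h2 := hassoc y z x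
  have h3 := hassoc z x y
  have h4 := hassoc x z y
  have h5 := hassoc y x z
  have h6 := hassoc z y x
  rw [← h1, ← h2, ← h3, h4, h5, h6]
  abel
end

section
/- Let (A, μ, α) be a Hom-associative algebra and β : A → A a linear map satisfying β(μ(x,y)) = μ(β(x), β(y)) for all x,y (a weak morphism). Define μ_β(x,y) = β(μ(x,y)). Then (A, μ_β, β∘α) is again a Hom-associative algebra, i.e., μ_β(μ_β(x,y), β(α(z))) = μ_β(β(α(x)), μ_β(y,z)) for all x,y,z ∈ A. -/
/-- Twisting a Hom-associative algebra along a self-weak morphism yields a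
Hom-associative algebra. -/
theorem stmt_1 {k A : Type*} [Field k] [AddCommGroup A] [Module k A]
    (μ : A →ₗ[k] A →ₗ[k] A) (α β : A →ₗ[k] A)
    (hassoc : ∀ x y z : A, μ (μ x y) (α z) = μ (α x) (μ y z))
    (hβ : ∀ x y : A, β (μ x y) = μ (β x) (β y))
    (μβ : A → A → A) (hμβ : ∀ x y : A, μβ x y = β (μ x y)) :
    ∀ x y z : A, μβ (μβ x y) (β (α z)) = μβ (β (α x)) (μβ y z) := by
  intro x y z
  simp only [hμβ, ← hβ, hassoc]
end

section
/- Let A be a vector space, μ : A×A×A → A a trilinear map, and α₁, α₂ : A → A linear maps such that total Hom-associativity holds: μ(μ(a₁,a₂,a₃), α₁(a₄), α₂(a₅)) = μ(α₁(a₁), μ(a₂,a₃,a₄), α₂(a₅)) = μ(α₁(a₁), α₂(a₂), μ(a₃,a₄,a₅)) for all aᵢ ∈ A. Let β : A → A be linear with β(μ(x,y,z)) = μ(β(x),β(y),β(z)) for all x,y,z. Then (A, β∘μ, (β∘α₁, β∘α₂)) is again a ternary totally Hom-associative algebra. -/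
/-- Twisting a ternary totally Hom-associative algebra along a self-weak morphism
yields a ternary totally Hom-associative algebra. -/
theorem stmt_2 {k A : Type*} [Field k] [AddCommGroup A] [Module k A]
    (μ : A →ₗ[k] A →ₗ[k] A →ₗ[k] A) (α₁ α₂ β : A →ₗ[k] A)
    (h1 : ∀ a₁ a₂ a₃ a₄ a₅ : A,
      μ (μ a₁ a₂ a₃) (α₁ a₄) (α₂ a₅) = μ (α₁ a₁) (μ a₂ a₃ a₄) (α₂ a₅))
    (h2 : ∀ a₁ a₂ a₃ a₄ a₅ : A,
      μ (α₁ a₁) (μ a₂ a₃ a₄) (α₂ a₅) = μ (α₁ a₁) (α₂ a₂) (μ a₃ a₄ a₅))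
    (hβ : ∀ x y z : A, β (μ x y z) = μ (β x) (β y) (β z))
    (ν : A → A → A → A) (hν : ∀ x y z : A, ν x y z = β (μ x y z)) :
    (∀ a₁ a₂ a₃ a₄ a₅ : A,
      ν (ν a₁ a₂ a₃) (β (α₁ a₄)) (β (α₂ a₅)) = ν (β (α₁ a₁)) (ν a₂ a₃ a₄) (β (α₂ a₅))) ∧
    (∀ a₁ a₂ a₃ a₄ a₅ : A,
      ν (β (α₁ a₁)) (ν a₂ a₃ a₄) (β (α₂ a₅)) = ν (β (α₁ a₁)) (β (α₂ a₂)) (ν a₃ a₄ a₅)) := by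
  constructor <;> intro a₁ a₂ a₃ a₄ a₅ <;>
    simp only [hν, ← hβ, h1 a₁ a₂ a₃ a₄ a₅, h2 a₁ a₂ a₃ a₄ a₅]
end

section
/- Let (A, μ) be a ternary totally associative algebra (μ(μ(a₁,a₂,a₃),a₄,a₅) = μ(a₁,μ(a₂,a₃,a₄),a₅) = μ(a₁,a₂,μ(a₃,a₄,a₅))) and β : A → A a morphism (β(μ(x,y,z)) = μ(β(x),β(y),β(z))). Then (A, β∘μ, β) is a multiplicative ternary totally Hom-associative algebra: setting μ_β = β∘μ, one has μ_β(μ_β(a₁,a₂,a₃), β(a₄), β(a₅)) = μ_β(β(a₁), μ_β(a₂,a₃,a₄), β(a₅)) = μ_β(β(a₁), β(a₂), μ_β(a₃,a₄,a₅)), and β∘μ_β = μ_β∘(β⊗β⊗β). -/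
/-- Twisting a ternary totally associative algebra along a self-morphism yields a
multiplicative ternary totally Hom-associative algebra. -/
theorem stmt_3 {k A : Type*} [Field k] [AddCommGroup A] [Module k A]
    (μ : A →ₗ[k] A →ₗ[k] A →ₗ[k] A) (β : A →ₗ[k] A)
    (h1 : ∀ a₁ a₂ a₃ a₄ a₅ : A, μ (μ a₁ a₂ a₃) a₄ a₅ = μ a₁ (μ a₂ a₃ a₄) a₅)
    (h2 : ∀ a₁ a₂ a₃ a₄ a₅ : A, μ a₁ (μ a₂ a₃ a₄) a₅ = μ a₁ a₂ (μ a₃ a₄ a₅))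
    (hβ : ∀ x y z : A, β (μ x y z) = μ (β x) (β y) (β z))
    (μβ : A → A → A → A) (hμβ : ∀ x y z : A, μβ x y z = β (μ x y z)) :
    (∀ a₁ a₂ a₃ a₄ a₅ : A,
      μβ (μβ a₁ a₂ a₃) (β a₄) (β a₅) = μβ (β a₁) (μβ a₂ a₃ a₄) (β a₅)) ∧
    (∀ a₁ a₂ a₃ a₄ a₅ : A,
      μβ (β a₁) (μβ a₂ a₃ a₄) (β a₅) = μβ (β a₁) (β a₂) (μβ a₃ a₄ a₅)) ∧
    (∀ x y z : A, β (μβ x y z) = μβ (β x) (β y) (β z)) := by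
  refine ⟨fun a₁ a₂ a₃ a₄ a₅ => ?_, fun a₁ a₂ a₃ a₄ a₅ => ?_, fun x y z => ?_⟩
  · rw [hμβ, hμβ, hμβ, hμβ, ← hβ, ← hβ, h1]
  · rw [hμβ, hμβ, hμβ, hμβ, ← hβ, ← hβ, h2]
  · rw [hμβ, hμβ, hβ, ← hβ]
end

section
/- Let (A, μ, α) be a multiplicative ternary totally Hom-associative algebra (all twisting maps equal to α, total Hom-associativity holds, and α∘μ = μ∘α^⊗3). Then (A, α∘μ, α²) is also a multiplicative ternary totally Hom-associative algebra. -/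
/-- If `(A, μ, α)` is a multiplicative ternary totally Hom-associative algebra, then so is
`(A, α∘μ, α²)`. -/
theorem stmt_4 {k A : Type*} [Field k] [AddCommGroup A] [Module k A]
    (μ : A →ₗ[k] A →ₗ[k] A →ₗ[k] A) (α : A →ₗ[k] A)
    (h1 : ∀ a₁ a₂ a₃ a₄ a₅ : A,
      μ (μ a₁ a₂ a₃) (α a₄) (α a₅) = μ (α a₁) (μ a₂ a₃ a₄) (α a₅))
    (h2 : ∀ a₁ a₂ a₃ a₄ a₅ : A,
      μ (α a₁) (μ a₂ a₃ a₄) (α a₅) = μ (α a₁) (α a₂) (μ a₃ a₄ a₅))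
    (hmult : ∀ x y z : A, α (μ x y z) = μ (α x) (α y) (α z))
    (ν : A → A → A → A) (hν : ∀ x y z : A, ν x y z = α (μ x y z)) :
    (∀ a₁ a₂ a₃ a₄ a₅ : A,
      ν (ν a₁ a₂ a₃) (α (α a₄)) (α (α a₅)) = ν (α (α a₁)) (ν a₂ a₃ a₄) (α (α a₅))) ∧
    (∀ a₁ a₂ a₃ a₄ a₅ : A,
      ν (α (α a₁)) (ν a₂ a₃ a₄) (α (α a₅)) = ν (α (α a₁)) (α (α a₂)) (ν a₃ a₄ a₅)) ∧
    (∀ x y z : A, α (α (ν x y z)) = ν (α (α x)) (α (α y)) (α (α z))) := by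
  refine ⟨fun a₁ a₂ a₃ a₄ a₅ => ?_, fun a₁ a₂ a₃ a₄ a₅ => ?_, fun x y z => ?_⟩ <;>
    simp only [hν, hmult]
  · rw [h1]
  · rw [h2]
end

section
/- Let (A, μ, α) be a multiplicative ternary totally Hom-associative algebra. Then for every k ≥ 0, (A, α^{2^k−1}∘μ, α^{2^k}) is also a multiplicative ternary totally Hom-associative algebra. -/
/-- Every multiplicative ternary totally Hom-associative algebra `(A, μ, α)` yields, for each
`K ≥ 0`, a multiplicative ternary totally Hom-associative algebra `(A, α^(2^K−1)∘μ, α^(2^K))`. -/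
theorem stmt_5 {k A : Type*} [Field k] [AddCommGroup A] [Module k A]
    (μ : A →ₗ[k] A →ₗ[k] A →ₗ[k] A) (α : A →ₗ[k] A)
    (h1 : ∀ a₁ a₂ a₃ a₄ a₅ : A,
      μ (μ a₁ a₂ a₃) (α a₄) (α a₅) = μ (α a₁) (μ a₂ a₃ a₄) (α a₅))
    (h2 : ∀ a₁ a₂ a₃ a₄ a₅ : A,
      μ (α a₁) (μ a₂ a₃ a₄) (α a₅) = μ (α a₁) (α a₂) (μ a₃ a₄ a₅))
    (hmult : ∀ x y z : A, α (μ x y z) = μ (α x) (α y) (α z)) :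
    ∀ K : ℕ, ∀ μK : A → A → A → A, ∀ αK : A →ₗ[k] A,
      (∀ x y z : A, μK x y z = (α ^ (2 ^ K - 1)) (μ x y z)) →
      αK = α ^ (2 ^ K) →
      (∀ a₁ a₂ a₃ a₄ a₅ : A,
        μK (μK a₁ a₂ a₃) (αK a₄) (αK a₅) = μK (αK a₁) (μK a₂ a₃ a₄) (αK a₅)) ∧
      (∀ a₁ a₂ a₃ a₄ a₅ : A,
        μK (αK a₁) (μK a₂ a₃ a₄) (αK a₅) = μK (αK a₁) (αK a₂) (μK a₃ a₄ a₅)) ∧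
      (∀ x y z : A, αK (μK x y z) = μK (αK x) (αK y) (αK z)) := by
  intro K μK αK hμK hαK
  have hm : ∀ m : ℕ, ∀ x y z : A,
      (α ^ m) (μ x y z) = μ ((α ^ m) x) ((α ^ m) y) ((α ^ m) z) := by
    intro m
    induction m with
    | zero => intro x y z; simp
    | succ m ih =>
      intro x y z
      simp only [pow_succ', Module.End.mul_apply, ih, hmult]
  set n : ℕ := 2 ^ K - 1 with hn
  have hsucc : 2 ^ K = n + 1 := by
    have : 1 ≤ 2 ^ K := Nat.one_le_two_pow
    omega
  have hαK' : ∀ x : A, αK x = (α ^ n) (α x) := by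
    intro x
    rw [hαK, hsucc, pow_succ, Module.End.mul_apply]
  refine ⟨?_, ?_, ?_⟩
  · intro a₁ a₂ a₃ a₄ a₅
    simp only [hμK, hαK', ← hm]
    exact congrArg _ (congrArg _ (h1 a₁ a₂ a₃ a₄ a₅))
  · intro a₁ a₂ a₃ a₄ a₅
    simp only [hμK, hαK', ← hm]
    exact congrArg _ (congrArg _ (h2 a₁ a₂ a₃ a₄ a₅))
  · intro x y z
    have comm : ∀ w : A, α ((α ^ n) w) = (α ^ n) (α w) := fun w => by
      rw [← Module.End.mul_apply, ← Module.End.mul_apply, ← pow_succ, ← pow_succ']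
    simp only [hμK, hαK', ← hm, ← hmult]
    exact congrArg _ (comm _)
end

section
/- Let (A, μ, α) be a multiplicative Hom-associative algebra: μ(μ(x,y), α(z)) = μ(α(x), μ(y,z)) and α(μ(x,y)) = μ(α(x), α(y)). Define the ternary product ν(a₁,a₂,a₃) = μ(μ(a₁,a₂), α(a₃)). Then (A, ν, α²) is a multiplicative ternary totally Hom-associative algebra: ν(ν(a₁,a₂,a₃), α²(a₄), α²(a₅)) = ν(α²(a₁), ν(a₂,a₃,a₄), α²(a₅)) = ν(α²(a₁), α²(a₂), ν(a₃,a₄,a₅)), and α²∘ν = ν∘(α²⊗α²⊗α²). -/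
/-- Every multiplicative Hom-associative algebra `(A, μ, α)` yields a multiplicative ternary
totally Hom-associative algebra `(A, ν, α²)` with `ν(a₁,a₂,a₃) = μ(μ(a₁,a₂), α(a₃))`. -/
theorem stmt_6 {k A : Type*} [Field k] [AddCommGroup A] [Module k A]
    (μ : A →ₗ[k] A →ₗ[k] A) (α : A →ₗ[k] A)
    (hassoc : ∀ x y z : A, μ (μ x y) (α z) = μ (α x) (μ y z))
    (hmult : ∀ x y : A, α (μ x y) = μ (α x) (α y))
    (ν : A → A → A → A) (hν : ∀ a₁ a₂ a₃ : A, ν a₁ a₂ a₃ = μ (μ a₁ a₂) (α a₃)) :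
    (∀ a₁ a₂ a₃ a₄ a₅ : A,
      ν (ν a₁ a₂ a₃) (α (α a₄)) (α (α a₅)) = ν (α (α a₁)) (ν a₂ a₃ a₄) (α (α a₅))) ∧
    (∀ a₁ a₂ a₃ a₄ a₅ : A,
      ν (α (α a₁)) (ν a₂ a₃ a₄) (α (α a₅)) = ν (α (α a₁)) (α (α a₂)) (ν a₃ a₄ a₅)) ∧
    (∀ x y z : A, α (α (ν x y z)) = ν (α (α x)) (α (α y)) (α (α z))) := by
  refine ⟨fun a₁ a₂ a₃ a₄ a₅ => ?_, fun a₁ a₂ a₃ a₄ a₅ => ?_, fun x y z => ?_⟩ <;>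
    simp only [hν, hmult, hassoc]
  conv_rhs => rw [← hmult a₄ a₅, ← hmult (α a₃) ((μ a₄) a₅), hassoc]
end

section
/- Let (A, μ, (α₁, α₂)) be a ternary totally Hom-associative algebra and a ∈ A an element such that α₂(a) = a and μ(x₁, x₂, a) = μ(x₁, a, x₂) for all x₁, x₂ ∈ A. Define the binary product x·y = μ(x, y, a). Then (A, ·, α₁) is a Hom-associative algebra: (x·y)·α₁(z) = α₁(x)·(y·z) for all x,y,z ∈ A. -/
/-- A ternary totally Hom-associative algebra with a suitable element `a` reduces to a
(binary) Hom-associative algebra via `x·y = μ(x,y,a)`. -/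
theorem stmt_8 {k A : Type*} [Field k] [AddCommGroup A] [Module k A]
    (μ : A →ₗ[k] A →ₗ[k] A →ₗ[k] A) (α₁ α₂ : A →ₗ[k] A)
    (h1 : ∀ a₁ a₂ a₃ a₄ a₅ : A,
      μ (μ a₁ a₂ a₃) (α₁ a₄) (α₂ a₅) = μ (α₁ a₁) (μ a₂ a₃ a₄) (α₂ a₅))
    (h2 : ∀ a₁ a₂ a₃ a₄ a₅ : A,
      μ (α₁ a₁) (μ a₂ a₃ a₄) (α₂ a₅) = μ (α₁ a₁) (α₂ a₂) (μ a₃ a₄ a₅))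
    (a : A) (ha1 : α₂ a = a)
    (ha2 : ∀ x₁ x₂ : A, μ x₁ x₂ a = μ x₁ a x₂)
    (mul : A → A → A) (hmul : ∀ x y : A, mul x y = μ x y a) :
    ∀ x y z : A, mul (mul x y) (α₁ z) = mul (α₁ x) (mul y z) := by
  intro x y z
  have h := h1 x y a z a
  rw [ha1] at h
  rw [hmul, hmul, hmul, hmul, h, ← ha2 y z]
end

section
/- Let (A, μ, (α₁,α₂,α₃)) be a 4-ary totally Hom-associative algebra and a ∈ A an element with α₃(a) = a and μ(x₁,x₂,x₃,a) = μ(x₁,x₂,a,x₃) for all xᵢ ∈ A. Define ν(x₁,x₂,x₃) = μ(x₁,x₂,x₃,a). Then (A, ν, (α₁,α₂)) is a ternary totally Hom-associative algebra: ν(ν(x₁,x₂,x₃), α₁(x₄), α₂(x₅)) = ν(α₁(x₁), ν(x₂,x₃,x₄), α₂(x₅)) = ν(α₁(x₁), α₂(x₂), ν(x₃,x₄,x₅)). -/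
/-- A 4-ary totally Hom-associative algebra with a suitable element `a` reduces to a ternary
totally Hom-associative algebra via `ν(x₁,x₂,x₃) = μ(x₁,x₂,x₃,a)`. -/
theorem stmt_9 {k A : Type*} [Field k] [AddCommGroup A] [Module k A]
    (μ : A →ₗ[k] A →ₗ[k] A →ₗ[k] A →ₗ[k] A) (α₁ α₂ α₃ : A →ₗ[k] A)
    (h1 : ∀ a₁ a₂ a₃ a₄ a₅ a₆ a₇ : A,
      μ (μ a₁ a₂ a₃ a₄) (α₁ a₅) (α₂ a₆) (α₃ a₇)
        = μ (α₁ a₁) (μ a₂ a₃ a₄ a₅) (α₂ a₆) (α₃ a₇))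
    (h2 : ∀ a₁ a₂ a₃ a₄ a₅ a₆ a₇ : A,
      μ (α₁ a₁) (μ a₂ a₃ a₄ a₅) (α₂ a₆) (α₃ a₇)
        = μ (α₁ a₁) (α₂ a₂) (μ a₃ a₄ a₅ a₆) (α₃ a₇))
    (h3 : ∀ a₁ a₂ a₃ a₄ a₅ a₆ a₇ : A,
      μ (α₁ a₁) (α₂ a₂) (μ a₃ a₄ a₅ a₆) (α₃ a₇)
        = μ (α₁ a₁) (α₂ a₂) (α₃ a₃) (μ a₄ a₅ a₆ a₇))
    (a : A) (ha1 : α₃ a = a)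
    (ha2 : ∀ x₁ x₂ x₃ : A, μ x₁ x₂ x₃ a = μ x₁ x₂ a x₃)
    (ν : A → A → A → A) (hν : ∀ x₁ x₂ x₃ : A, ν x₁ x₂ x₃ = μ x₁ x₂ x₃ a) :
    (∀ x₁ x₂ x₃ x₄ x₅ : A,
      ν (ν x₁ x₂ x₃) (α₁ x₄) (α₂ x₅) = ν (α₁ x₁) (ν x₂ x₃ x₄) (α₂ x₅)) ∧
    (∀ x₁ x₂ x₃ x₄ x₅ : A,
      ν (α₁ x₁) (ν x₂ x₃ x₄) (α₂ x₅) = ν (α₁ x₁) (α₂ x₂) (ν x₃ x₄ x₅)) := by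
  constructor
  · intro x₁ x₂ x₃ x₄ x₅
    simp only [hν]
    calc μ (μ x₁ x₂ x₃ a) (α₁ x₄) (α₂ x₅) a
        = μ (μ x₁ x₂ x₃ a) (α₁ x₄) (α₂ x₅) (α₃ a) := by rw [ha1]
      _ = μ (α₁ x₁) (μ x₂ x₃ a x₄) (α₂ x₅) (α₃ a) := h1 x₁ x₂ x₃ a x₄ x₅ a
      _ = μ (α₁ x₁) (μ x₂ x₃ x₄ a) (α₂ x₅) (α₃ a) := by rw [ha2]
      _ = μ (α₁ x₁) (μ x₂ x₃ x₄ a) (α₂ x₅) a := by rw [ha1]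
  · intro x₁ x₂ x₃ x₄ x₅
    simp only [hν]
    calc μ (α₁ x₁) (μ x₂ x₃ x₄ a) (α₂ x₅) a
        = μ (α₁ x₁) (μ x₂ x₃ x₄ a) (α₂ x₅) (α₃ a) := by rw [ha1]
      _ = μ (α₁ x₁) (α₂ x₂) (μ x₃ x₄ a x₅) (α₃ a) := h2 x₁ x₂ x₃ x₄ a x₅ a
      _ = μ (α₁ x₁) (α₂ x₂) (μ x₃ x₄ x₅ a) (α₃ a) := by rw [ha2]
      _ = μ (α₁ x₁) (α₂ x₂) (μ x₃ x₄ x₅ a) a := by rw [ha1]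
end

section
/- Let (A, μ, α) be a ternary totally Hom-associative algebra with both twisting maps equal to α. Define the 3-commutator [a₁,a₂,a₃] = μ(a₁,a₂,a₃) − μ(a₂,a₁,a₃) − μ(a₃,a₁,a₂) + μ(a₃,a₂,a₁). Then (A, [·,·,·], α) is a ternary Hom-Nambu algebra: for all x₁,x₂,y₁,y₂,y₃ ∈ A, [α(x₁), α(x₂), [y₁,y₂,y₃]] = [[x₁,x₂,y₁], α(y₂), α(y₃)] + [α(y₁), [x₁,x₂,y₂], α(y₃)] + [α(y₁), α(y₂), [x₁,x₂,y₃]]. -/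
/-- A ternary totally Hom-associative algebra with equal twisting maps yields a ternary
Hom-Nambu algebra via the 3-commutator bracket. -/
theorem stmt_10 {k A : Type*} [Field k] [AddCommGroup A] [Module k A]
    (μ : A →ₗ[k] A →ₗ[k] A →ₗ[k] A) (α : A →ₗ[k] A)
    (h1 : ∀ a₁ a₂ a₃ a₄ a₅ : A,
      μ (μ a₁ a₂ a₃) (α a₄) (α a₅) = μ (α a₁) (μ a₂ a₃ a₄) (α a₅))
    (h2 : ∀ a₁ a₂ a₃ a₄ a₅ : A,
      μ (α a₁) (μ a₂ a₃ a₄) (α a₅) = μ (α a₁) (α a₂) (μ a₃ a₄ a₅))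
    (b : A → A → A → A)
    (hb : ∀ a₁ a₂ a₃ : A, b a₁ a₂ a₃ = μ a₁ a₂ a₃ - μ a₂ a₁ a₃ - μ a₃ a₁ a₂ + μ a₃ a₂ a₁) :
    ∀ x₁ x₂ y₁ y₂ y₃ : A,
      b (α x₁) (α x₂) (b y₁ y₂ y₃)
        = b (b x₁ x₂ y₁) (α y₂) (α y₃) + b (α y₁) (b x₁ x₂ y₂) (α y₃)
          + b (α y₁) (α y₂) (b x₁ x₂ y₃) := by
  intro x₁ x₂ y₁ y₂ y₃
  simp only [hb, map_sub, map_add, LinearMap.sub_apply, LinearMap.add_apply, h1, h2]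
  abel
end

section
/- Let (A, μ) be a ternary totally associative algebra: μ(μ(a₁,a₂,a₃),a₄,a₅) = μ(a₁,μ(a₂,a₃,a₄),a₅) = μ(a₁,a₂,μ(a₃,a₄,a₅)). Define [a₁,a₂,a₃] = μ(a₁,a₂,a₃) − μ(a₂,a₁,a₃) − μ(a₃,a₁,a₂) + μ(a₃,a₂,a₁). Then the ternary Nambu identity holds: [x₁, x₂, [y₁,y₂,y₃]] = [[x₁,x₂,y₁], y₂, y₃] + [y₁, [x₁,x₂,y₂], y₃] + [y₁, y₂, [x₁,x₂,y₃]] for all xᵢ, yⱼ ∈ A. -/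
/-- A ternary totally associative algebra yields a ternary Nambu algebra via the
3-commutator bracket. -/
theorem stmt_11 {k A : Type*} [Field k] [AddCommGroup A] [Module k A]
    (μ : A →ₗ[k] A →ₗ[k] A →ₗ[k] A)
    (h1 : ∀ a₁ a₂ a₃ a₄ a₅ : A, μ (μ a₁ a₂ a₃) a₄ a₅ = μ a₁ (μ a₂ a₃ a₄) a₅)
    (h2 : ∀ a₁ a₂ a₃ a₄ a₅ : A, μ a₁ (μ a₂ a₃ a₄) a₅ = μ a₁ a₂ (μ a₃ a₄ a₅))
    (b : A → A → A → A)
    (hb : ∀ a₁ a₂ a₃ : A, b a₁ a₂ a₃ = μ a₁ a₂ a₃ - μ a₂ a₁ a₃ - μ a₃ a₁ a₂ + μ a₃ a₂ a₁) :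
    ∀ x₁ x₂ y₁ y₂ y₃ : A,
      b x₁ x₂ (b y₁ y₂ y₃)
        = b (b x₁ x₂ y₁) y₂ y₃ + b y₁ (b x₁ x₂ y₂) y₃ + b y₁ y₂ (b x₁ x₂ y₃) := by
  intro x₁ x₂ y₁ y₂ y₃
  simp only [hb, map_sub, map_add, LinearMap.sub_apply, LinearMap.add_apply, h1, h2]
  abel
end

section
/- Let A be an associative algebra and define the 4-ary product π(a₁,a₂,a₃,a₄) = a₁a₂a₃a₄. Define the 4-commutator [a₁,a₂,a₃,a₄] as the signed sum over the 8 four-commutator words: a₁a₂a₃a₄ − a₂a₁a₃a₄ − a₃a₁a₂a₄ + a₃a₂a₁a₄ − a₄a₁a₂a₃ + a₄a₂a₁a₃ + a₄a₃a₁a₂ − a₄a₃a₂a₁. Then (A, [·,·,·,·]) is a 4-ary Nambu algebra: [x₁,x₂,x₃,[y₁,y₂,y₃,y₄]] = Σ_{i=1}^{4} [y₁,...,y_{i−1}, [x₁,x₂,x₃,y_i], y_{i+1},...,y₄] for all xⱼ, y_l ∈ A. -/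
/-- The 4-commutator bracket of an associative algebra satisfies the 4-ary Nambu identity. -/
theorem stmt_12 {k A : Type*} [Field k] [Ring A] [Algebra k A]
    (b : A → A → A → A → A)
    (hb : ∀ a₁ a₂ a₃ a₄ : A,
      b a₁ a₂ a₃ a₄ = a₁*a₂*a₃*a₄ - a₂*a₁*a₃*a₄ - a₃*a₁*a₂*a₄ + a₃*a₂*a₁*a₄
        - a₄*a₁*a₂*a₃ + a₄*a₂*a₁*a₃ + a₄*a₃*a₁*a₂ - a₄*a₃*a₂*a₁) :
    ∀ x₁ x₂ x₃ y₁ y₂ y₃ y₄ : A,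
      b x₁ x₂ x₃ (b y₁ y₂ y₃ y₄)
        = b (b x₁ x₂ x₃ y₁) y₂ y₃ y₄ + b y₁ (b x₁ x₂ x₃ y₂) y₃ y₄
          + b y₁ y₂ (b x₁ x₂ x₃ y₃) y₄ + b y₁ y₂ y₃ (b x₁ x₂ x₃ y₄) := by
  intro x₁ x₂ x₃ y₁ y₂ y₃ y₄
  simp only [hb]
  noncomm_ring
end

section
/- Let V₁, V₂ be vector spaces, A = Hom(V₁,V₂) ⊕ Hom(V₂,V₁) the ternary totally associative algebra with product π((f₁,f₂),(g₁,g₂),(h₁,h₂)) = (h₁∘g₂∘f₁, h₂∘g₁∘f₂), and let γ₁ : V₁ → V₁, γ₂ : V₂ → V₂ be linear automorphisms. Then α(f₁,f₂) = (γ₂⁻¹∘f₁∘γ₁, γ₁⁻¹∘f₂∘γ₂) is an automorphism of this ternary totally associative algebra, i.e., α(π(x,y,z)) = π(α(x), α(y), α(z)) for all x,y,z ∈ A, and consequently (A, α∘π, α) is a multiplicative ternary totally Hom-associative algebra. -/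
/-- Conjugation by linear automorphisms is an automorphism of the ternary totally associative
algebra `A = Hom(V₁,V₂) ⊕ Hom(V₂,V₁)`, and hence `(A, α∘π, α)` is a multiplicative ternary
totally Hom-associative algebra. -/
theorem stmt_15 {k V₁ V₂ : Type*} [Field k]
    [AddCommGroup V₁] [Module k V₁] [AddCommGroup V₂] [Module k V₂]
    (π : ((V₁ →ₗ[k] V₂) × (V₂ →ₗ[k] V₁)) → ((V₁ →ₗ[k] V₂) × (V₂ →ₗ[k] V₁)) →
      ((V₁ →ₗ[k] V₂) × (V₂ →ₗ[k] V₁)) → ((V₁ →ₗ[k] V₂) × (V₂ →ₗ[k] V₁)))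
    (hπ : ∀ f g h : (V₁ →ₗ[k] V₂) × (V₂ →ₗ[k] V₁),
      π f g h = (h.1 ∘ₗ g.2 ∘ₗ f.1, h.2 ∘ₗ g.1 ∘ₗ f.2))
    (γ₁ : V₁ ≃ₗ[k] V₁) (γ₂ : V₂ ≃ₗ[k] V₂)
    (α : ((V₁ →ₗ[k] V₂) × (V₂ →ₗ[k] V₁)) → ((V₁ →ₗ[k] V₂) × (V₂ →ₗ[k] V₁)))
    (hα : ∀ f : (V₁ →ₗ[k] V₂) × (V₂ →ₗ[k] V₁),
      α f = ((γ₂.symm : V₂ →ₗ[k] V₂) ∘ₗ f.1 ∘ₗ (γ₁ : V₁ →ₗ[k] V₁),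
             (γ₁.symm : V₁ →ₗ[k] V₁) ∘ₗ f.2 ∘ₗ (γ₂ : V₂ →ₗ[k] V₂)))
    (ν : ((V₁ →ₗ[k] V₂) × (V₂ →ₗ[k] V₁)) → ((V₁ →ₗ[k] V₂) × (V₂ →ₗ[k] V₁)) →
      ((V₁ →ₗ[k] V₂) × (V₂ →ₗ[k] V₁)) → ((V₁ →ₗ[k] V₂) × (V₂ →ₗ[k] V₁)))
    (hν : ∀ x y z, ν x y z = α (π x y z)) :
    (∀ x y z, α (π x y z) = π (α x) (α y) (α z)) ∧
    (∀ a₁ a₂ a₃ a₄ a₅,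
      ν (ν a₁ a₂ a₃) (α a₄) (α a₅) = ν (α a₁) (ν a₂ a₃ a₄) (α a₅)) ∧
    (∀ a₁ a₂ a₃ a₄ a₅,
      ν (α a₁) (ν a₂ a₃ a₄) (α a₅) = ν (α a₁) (α a₂) (ν a₃ a₄ a₅)) ∧
    (∀ x y z, α (ν x y z) = ν (α x) (α y) (α z)) := by
  have key : ∀ x y z, α (π x y z) = π (α x) (α y) (α z) := by
    intro x y z
    simp only [hα, hπ]
    rw [Prod.mk.injEq]; constructor <;> ext v <;> simp [LinearMap.comp_apply]
  refine ⟨key, ?_, ?_, ?_⟩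
  · intro a₁ a₂ a₃ a₄ a₅
    simp only [hν, key, hπ, hα]
    rw [Prod.mk.injEq]; constructor <;> ext v <;> simp [LinearMap.comp_apply]
  · intro a₁ a₂ a₃ a₄ a₅
    simp only [hν, key, hπ, hα]
    rw [Prod.mk.injEq]; constructor <;> ext v <;> simp [LinearMap.comp_apply]
  · intro x y z
    simp only [hν, key]
end

section
/- Let (A, μ, α) be a multiplicative ternary totally Hom-associative algebra (equal twisting maps, α∘μ = μ∘α^⊗3). Define the 5-ary product π(a₁,...,a₅) = μ(μ(a₁,a₂,a₃), α(a₄), α(a₅)). Then (A, π, α²) is a multiplicative 5-ary totally Hom-associative algebra: for all j ∈ {1,2,3,4} and a₁,...,a₉ ∈ A, π(α²(a₁),...,α²(a_{j−1}), π(a_j,...,a_{j+4}), α²(a_{j+5}),...,α²(a₉)) is independent of j, and α²∘π = π∘(α²)^⊗5. -/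
/-- Every multiplicative ternary totally Hom-associative algebra `(A, μ, α)` yields a
multiplicative 5-ary totally Hom-associative algebra `(A, π, α²)` with
`π(a₁,...,a₅) = μ(μ(a₁,a₂,a₃), α(a₄), α(a₅))`. -/
theorem stmt_17 {k A : Type*} [Field k] [AddCommGroup A] [Module k A]
    (μ : A →ₗ[k] A →ₗ[k] A →ₗ[k] A) (α : A →ₗ[k] A)
    (h1 : ∀ a₁ a₂ a₃ a₄ a₅ : A,
      μ (μ a₁ a₂ a₃) (α a₄) (α a₅) = μ (α a₁) (μ a₂ a₃ a₄) (α a₅))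
    (h2 : ∀ a₁ a₂ a₃ a₄ a₅ : A,
      μ (α a₁) (μ a₂ a₃ a₄) (α a₅) = μ (α a₁) (α a₂) (μ a₃ a₄ a₅))
    (hmult : ∀ x y z : A, α (μ x y z) = μ (α x) (α y) (α z))
    (π : A → A → A → A → A → A)
    (hπ : ∀ a₁ a₂ a₃ a₄ a₅ : A, π a₁ a₂ a₃ a₄ a₅ = μ (μ a₁ a₂ a₃) (α a₄) (α a₅))
    (β : A → A) (hβ : ∀ x : A, β x = α (α x)) :
    (∀ a₁ a₂ a₃ a₄ a₅ a₆ a₇ a₈ a₉ : A,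
      π (π a₁ a₂ a₃ a₄ a₅) (β a₆) (β a₇) (β a₈) (β a₉)
        = π (β a₁) (π a₂ a₃ a₄ a₅ a₆) (β a₇) (β a₈) (β a₉)) ∧
    (∀ a₁ a₂ a₃ a₄ a₅ a₆ a₇ a₈ a₉ : A,
      π (β a₁) (π a₂ a₃ a₄ a₅ a₆) (β a₇) (β a₈) (β a₉)
        = π (β a₁) (β a₂) (π a₃ a₄ a₅ a₆ a₇) (β a₈) (β a₉)) ∧
    (∀ a₁ a₂ a₃ a₄ a₅ a₆ a₇ a₈ a₉ : A,
      π (β a₁) (β a₂) (π a₃ a₄ a₅ a₆ a₇) (β a₈) (β a₉)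
        = π (β a₁) (β a₂) (β a₃) (π a₄ a₅ a₆ a₇ a₈) (β a₉)) ∧
    (∀ a₁ a₂ a₃ a₄ a₅ a₆ a₇ a₈ a₉ : A,
      π (β a₁) (β a₂) (β a₃) (π a₄ a₅ a₆ a₇ a₈) (β a₉)
        = π (β a₁) (β a₂) (β a₃) (β a₄) (π a₅ a₆ a₇ a₈ a₉)) ∧
    (∀ a₁ a₂ a₃ a₄ a₅ : A,
      β (π a₁ a₂ a₃ a₄ a₅) = π (β a₁) (β a₂) (β a₃) (β a₄) (β a₅)) := by
  refine ⟨?_, ?_, ?_, ?_, ?_⟩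
  · intros; simp only [hπ, hβ, hmult, h1, h2]
  · intros; simp only [hπ, hβ, hmult, h1, h2]
  · intro a₁ a₂ a₃ a₄ a₅ a₆ a₇ a₈ a₉
    simp only [hπ, hβ, hmult, h1, h2]
    rw [← hmult a₆ a₇ a₈, ← hmult (α a₄) (α a₅) (μ a₆ a₇ a₈)]
    simp only [h1, h2]
  · intro a₁ a₂ a₃ a₄ a₅ a₆ a₇ a₈ a₉
    simp only [hπ, hβ, hmult, h1, h2]
    rw [← hmult a₆ a₇ a₈, ← hmult (α a₄) (α a₅) (μ a₆ a₇ a₈),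
        ← hmult a₇ a₈ a₉, ← hmult (α a₅) (α a₆) (μ a₇ a₈ a₉)]
    simp only [h1, h2]
  · intros; simp only [hπ, hβ, hmult, h1, h2]
end

section
/- Let (A, μ, α) be an n-ary Hom-algebra with equal twisting maps and β : A → A a weak morphism (β∘μ = μ∘β^⊗n). Then for each i ∈ {1,...,n−1}, the i-th Hom-associator of the twisted Hom-algebra A_β = (A, β∘μ, β∘α) equals β² composed with the i-th Hom-associator of A: as^i_{A_β} = β²∘as^i_A. In particular, if A is totally Hom-associative, so is A_β. -/
/-- (Case n = 3.) For a ternary Hom-algebra `(A, μ, α)` with equal twisting maps and a weak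
morphism `β`, the Hom-associators of the twisted Hom-algebra `A_β = (A, β∘μ, β∘α)` equal
`β²` composed with the Hom-associators of `A`; in particular total Hom-associativity is
preserved under twisting. -/
theorem stmt_19 {k A : Type*} [Field k] [AddCommGroup A] [Module k A]
    (μ : A →ₗ[k] A →ₗ[k] A →ₗ[k] A) (α β : A →ₗ[k] A)
    (hβ : ∀ x y z : A, β (μ x y z) = μ (β x) (β y) (β z))
    (ν : A → A → A → A) (hν : ∀ x y z : A, ν x y z = β (μ x y z))
    (as₁ as₂ asβ₁ asβ₂ : A → A → A → A → A → A)
    (has₁ : ∀ a₁ a₂ a₃ a₄ a₅ : A,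
      as₁ a₁ a₂ a₃ a₄ a₅ = μ (μ a₁ a₂ a₃) (α a₄) (α a₅) - μ (α a₁) (μ a₂ a₃ a₄) (α a₅))
    (has₂ : ∀ a₁ a₂ a₃ a₄ a₅ : A,
      as₂ a₁ a₂ a₃ a₄ a₅ = μ (α a₁) (μ a₂ a₃ a₄) (α a₅) - μ (α a₁) (α a₂) (μ a₃ a₄ a₅))
    (hasβ₁ : ∀ a₁ a₂ a₃ a₄ a₅ : A,
      asβ₁ a₁ a₂ a₃ a₄ a₅
        = ν (ν a₁ a₂ a₃) (β (α a₄)) (β (α a₅)) - ν (β (α a₁)) (ν a₂ a₃ a₄) (β (α a₅)))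
    (hasβ₂ : ∀ a₁ a₂ a₃ a₄ a₅ : A,
      asβ₂ a₁ a₂ a₃ a₄ a₅
        = ν (β (α a₁)) (ν a₂ a₃ a₄) (β (α a₅)) - ν (β (α a₁)) (β (α a₂)) (ν a₃ a₄ a₅)) :
    (∀ a₁ a₂ a₃ a₄ a₅ : A, asβ₁ a₁ a₂ a₃ a₄ a₅ = β (β (as₁ a₁ a₂ a₃ a₄ a₅))) ∧
    (∀ a₁ a₂ a₃ a₄ a₅ : A, asβ₂ a₁ a₂ a₃ a₄ a₅ = β (β (as₂ a₁ a₂ a₃ a₄ a₅))) ∧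
    ((∀ a₁ a₂ a₃ a₄ a₅ : A, as₁ a₁ a₂ a₃ a₄ a₅ = 0 ∧ as₂ a₁ a₂ a₃ a₄ a₅ = 0) →
      ∀ a₁ a₂ a₃ a₄ a₅ : A, asβ₁ a₁ a₂ a₃ a₄ a₅ = 0 ∧ asβ₂ a₁ a₂ a₃ a₄ a₅ = 0) := by
  have h1 : ∀ a₁ a₂ a₃ a₄ a₅ : A, asβ₁ a₁ a₂ a₃ a₄ a₅ = β (β (as₁ a₁ a₂ a₃ a₄ a₅)) := by
    intro a₁ a₂ a₃ a₄ a₅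
    simp only [hasβ₁, has₁, hν, map_sub, hβ]
  have h2 : ∀ a₁ a₂ a₃ a₄ a₅ : A, asβ₂ a₁ a₂ a₃ a₄ a₅ = β (β (as₂ a₁ a₂ a₃ a₄ a₅)) := by
    intro a₁ a₂ a₃ a₄ a₅
    simp only [hasβ₂, has₂, hν, map_sub, hβ]
  refine ⟨h1, h2, fun h a₁ a₂ a₃ a₄ a₅ => ⟨?_, ?_⟩⟩
  · rw [h1, (h a₁ a₂ a₃ a₄ a₅).1, map_zero, map_zero]
  · rw [h2, (h a₁ a₂ a₃ a₄ a₅).2, map_zero, map_zero]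
end
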